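/- In the extended Black–Scholes model with an earnings announcement, the call price C(t,S) = C_BS(T−t, S; I(t), K, r) with I(t) = √(σ² + σ_e²/(T−t)) satisfies, for 0 ≤ t < T, the Theta identity: ∂C/∂t = Θ_BS(T−t, S; I(t), K, r) + (1/(2·I(t)))·(σ_e/(T−t))²·V_BS(T−t, S; I(t), K, r), where Θ_BS(τ, S; σ, K, r) = −S·σ·φ(d₁)/(2√τ) − r·K·e^{−rτ}·Φ(d₂) and V_BS(τ, S; σ, K, r) = S·φ(d₁)·√τ. -/

import Mathlib

open MeasureTheory ProbabilityTheory

/-- The standard normal cumulative distribution function `Φ`. -/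
noncomputable def stdNormalCDF (x : ℝ) : ℝ := ((gaussianReal 0 1) (Set.Iic x)).toReal

/-- The standard normal density `φ`. -/
noncomputable def stdNormalPDF (x : ℝ) : ℝ := Real.exp (-x ^ 2 / 2) / Real.sqrt (2 * Real.pi)

/-- The Black–Scholes quantity `d₁`. -/
noncomputable def d1 (τ S σ K r : ℝ) : ℝ :=
  (Real.log (S / K) + (r + σ ^ 2 / 2) * τ) / (σ * Real.sqrt τ)

/-- The Black–Scholes quantity `d₂ = d₁ − σ√τ`. -/
noncomputable def d2 (τ S σ K r : ℝ) : ℝ := d1 τ S σ K r - σ * Real.sqrt τ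

/-- The Black–Scholes call price `C_BS(τ, S; σ, K, r) = S·Φ(d₁) − K·e^{−rτ}·Φ(d₂)`. -/
noncomputable def BSCall (τ S σ K r : ℝ) : ℝ :=
  S * stdNormalCDF (d1 τ S σ K r) - K * Real.exp (-r * τ) * stdNormalCDF (d2 τ S σ K r)

/-- The Black–Scholes Vega `V_BS(τ, S; σ, K, r) = S·φ(d₁)·√τ`. -/
noncomputable def BSVega (τ S σ K r : ℝ) : ℝ :=
  S * stdNormalPDF (d1 τ S σ K r) * Real.sqrt τ

/-- The Black–Scholes Theta
`Θ_BS(τ, S; σ, K, r) = −S·σ·φ(d₁)/(2√τ) − r·K·e^{−rτ}·Φ(d₂)`. -/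
noncomputable def BSTheta (τ S σ K r : ℝ) : ℝ :=
  -S * σ * stdNormalPDF (d1 τ S σ K r) / (2 * Real.sqrt τ)
    - r * K * Real.exp (-r * τ) * stdNormalCDF (d2 τ S σ K r)

/-!
Along any curve `s ↦ (τ s, v s)` the Black–Scholes price moves by `-τ' Θ_BS + v' V_BS`: the
`d₁`-derivatives of the two normal terms cancel because `K e^{-rτ} φ(d₂) = S φ(d₁)`, so only the
derivative of the gap `d₁ - d₂ = v √τ` and of the discount factor survive. For the
announcement model take `τ = T - s` and `v = I`; from `I² = σ² + σ_e²/(T - s)` one gets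
`I' = (σ_e/(T - t))² / (2 I)`.
-/

open Real

lemma stdNormalPDF_eq_gaussianPDFReal : stdNormalPDF = gaussianPDFReal 0 1 := by
  ext x
  simp only [stdNormalPDF, gaussianPDFReal, NNReal.coe_one, mul_one, sub_zero]
  rw [div_eq_inv_mul]

lemma continuous_stdNormalPDF : Continuous stdNormalPDF := by
  unfold stdNormalPDF
  fun_prop

lemma stdNormalCDF_eq_integral (x : ℝ) :
    stdNormalCDF x = ∫ u in Set.Iic x, gaussianPDFReal 0 1 u := by
  rw [stdNormalCDF, gaussianReal_apply_eq_integral 0 one_ne_zero,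
    ENNReal.toReal_ofReal (integral_nonneg fun _ => gaussianPDFReal_nonneg _ _ _)]

lemma hasDerivAt_stdNormalCDF (x : ℝ) : HasDerivAt stdNormalCDF (stdNormalPDF x) x := by
  have hint : Integrable (gaussianPDFReal 0 1) := integrable_gaussianPDFReal 0 1
  have hcdf : stdNormalCDF = fun y => stdNormalCDF 0 + ∫ u in (0 : ℝ)..y, gaussianPDFReal 0 1 u := by
    funext y
    rw [stdNormalCDF_eq_integral, stdNormalCDF_eq_integral,
      ← intervalIntegral.integral_Iic_sub_Iic hint.integrableOn hint.integrableOn]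
    ring
  have hcont : Continuous (gaussianPDFReal 0 1) :=
    stdNormalPDF_eq_gaussianPDFReal ▸ continuous_stdNormalPDF
  rw [hcdf, stdNormalPDF_eq_gaussianPDFReal]
  exact (intervalIntegral.integral_hasDerivAt_right hint.intervalIntegrable
    hcont.stronglyMeasurable.stronglyMeasurableAtFilter hcont.continuousAt).const_add _

lemma mul_exp_mul_stdNormalPDF_d2 {τ S σ K : ℝ} (r : ℝ) (hS : 0 < S) (hK : 0 < K)
    (hσ : σ ≠ 0) (hτ : 0 < τ) :
    K * exp (-r * τ) * stdNormalPDF (d2 τ S σ K r) = S * stdNormalPDF (d1 τ S σ K r) := by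
  have hvol : σ * √τ ≠ 0 := mul_ne_zero hσ (sqrt_pos.2 hτ).ne'
  have hd1 : d1 τ S σ K r * (σ * √τ) = log (S / K) + (r + σ ^ 2 / 2) * τ :=
    div_mul_cancel₀ _ hvol
  have hsq : -d2 τ S σ K r ^ 2 / 2 = -d1 τ S σ K r ^ 2 / 2 + log (S / K) + r * τ := by
    rw [d2]
    linear_combination hd1 - σ ^ 2 * sq_sqrt hτ.le / 2
  rw [stdNormalPDF, stdNormalPDF, hsq, exp_add, exp_add, exp_log (div_pos hS hK), neg_mul,
    exp_neg]
  field_simp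

lemma DifferentiableAt.d1_comp {τ v : ℝ → ℝ} {t : ℝ} (S K r : ℝ) (hτ : DifferentiableAt ℝ τ t)
    (hv : DifferentiableAt ℝ v t) (hτpos : 0 < τ t) (hv0 : v t ≠ 0) :
    DifferentiableAt ℝ (fun s => d1 (τ s) S (v s) K r) t := by
  unfold d1
  refine DifferentiableAt.div (by fun_prop) (hv.mul (hτ.sqrt hτpos.ne')) ?_
  exact mul_ne_zero hv0 (sqrt_pos.2 hτpos).ne'

theorem hasDerivAt_BSCall_comp {τ v : ℝ → ℝ} {τ' v' t S K : ℝ} (r : ℝ) (hS : 0 < S)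
    (hK : 0 < K) (hτ : HasDerivAt τ τ' t) (hv : HasDerivAt v v' t) (hτpos : 0 < τ t)
    (hv0 : v t ≠ 0) :
    HasDerivAt (fun s => BSCall (τ s) S (v s) K r)
      (-τ' * BSTheta (τ t) S (v t) K r + v' * BSVega (τ t) S (v t) K r) t := by
  obtain ⟨d1', hd1⟩ : ∃ d, HasDerivAt (fun s => d1 (τ s) S (v s) K r) d t :=
    ⟨_, (hτ.differentiableAt.d1_comp S K r hv.differentiableAt hτpos hv0).hasDerivAt⟩
  have hd2 : HasDerivAt (fun s => d2 (τ s) S (v s) K r)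
      (d1' - (v' * √(τ t) + v t * (τ' / (2 * √(τ t))))) t :=
    hd1.sub (hv.mul (hτ.sqrt hτpos.ne'))
  have hdisc : HasDerivAt (fun s => exp (-r * τ s)) (exp (-r * τ t) * (-r * τ')) t :=
    (hτ.const_mul (-r)).exp
  have hcall := (((hasDerivAt_stdNormalCDF _).comp t hd1).const_mul S).sub
    ((hdisc.const_mul K).mul ((hasDerivAt_stdNormalCDF _).comp t hd2))
  refine hcall.congr_deriv ?_
  have hkey := mul_exp_mul_stdNormalPDF_d2 r hS hK hv0 hτpos
  simp only [BSTheta, BSVega, Function.comp_apply]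
  linear_combination (v' * √(τ t) + v t * τ' / (2 * √(τ t)) - d1') * hkey

theorem extendedBS_theta_general
    (r σ σe t T S K : ℝ) (hσ : 0 < σ)
    (hS : 0 < S) (hK : 0 < K) (htT : t < T) :
    HasDerivAt (fun s : ℝ => BSCall (T - s) S (Real.sqrt (σ ^ 2 + σe ^ 2 / (T - s))) K r)
      (BSTheta (T - t) S (Real.sqrt (σ ^ 2 + σe ^ 2 / (T - t))) K r
        + 1 / (2 * Real.sqrt (σ ^ 2 + σe ^ 2 / (T - t))) * (σe / (T - t)) ^ 2
          * BSVega (T - t) S (Real.sqrt (σ ^ 2 + σe ^ 2 / (T - t))) K r) t := by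
  have hτ : 0 < T - t := sub_pos.2 htT
  have hτ' : HasDerivAt (fun s => T - s) (-1) t := (hasDerivAt_id t).const_sub T
  have hI2pos : 0 < σ ^ 2 + σe ^ 2 / (T - t) := by positivity
  have hI : HasDerivAt (fun s => √(σ ^ 2 + σe ^ 2 / (T - s)))
      ((σe / (T - t)) ^ 2 / (2 * √(σ ^ 2 + σe ^ 2 / (T - t)))) t := by
    refine ((((hasDerivAt_const t (σe ^ 2)).fun_div hτ' hτ.ne').const_add (σ ^ 2)).sqrt
      hI2pos.ne').congr_deriv ?_
    rw [div_pow]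
    ring
  convert hasDerivAt_BSCall_comp r hS hK hτ' hI hτ (sqrt_pos.2 hI2pos).ne' using 1
  ring

/-- Theta identity: in the extended Black–Scholes model with an EA jump,
for `0 ≤ t < T` the time derivative of the pre-announcement call price
`C(t,S) = C_BS(T−t, S; I(t), K, r)`, with `I(t) = √(σ² + σ_e²/(T−t))`, equals
`Θ_BS(T−t, S; I(t), K, r) + (1/(2·I(t)))·(σ_e/(T−t))²·V_BS(T−t, S; I(t), K, r)`. -/
theorem extendedBS_theta
    (r σ σe t T S K : ℝ) (hr : 0 ≤ r) (hσ : 0 < σ) (hσe : 0 < σe)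
    (hS : 0 < S) (hK : 0 < K) (ht : 0 ≤ t) (htT : t < T) :
    HasDerivAt (fun s : ℝ => BSCall (T - s) S (Real.sqrt (σ ^ 2 + σe ^ 2 / (T - s))) K r)
      (BSTheta (T - t) S (Real.sqrt (σ ^ 2 + σe ^ 2 / (T - t))) K r
        + 1 / (2 * Real.sqrt (σ ^ 2 + σe ^ 2 / (T - t))) * (σe / (T - t)) ^ 2
          * BSVega (T - t) S (Real.sqrt (σ ^ 2 + σe ^ 2 / (T - t))) K r) t :=
  extendedBS_theta_general r σ σe t T S K hσ hS hK htT
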